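/- arXiv:2508.12054 — 3 statements merged into one kernel-verified Lean document; each statement's English description precedes it below -/
import Mathlib

section
/- The map f defined on pairs (p, w), where p is a prime number and w is either a natural number o (a static offset) or a prime number r (a variable prime for a dynamic index), by f(p, o) = p^(2^(o+1)) in the static case and f(p, r) = p^(3^r) in the dynamic case, is injective: if two such pairs yield the same value then they have the same prime p and the same kind and value of second component. -/
/-- Encoding of a variable usage: the variable prime `p` raised to `2^(o+1)` for a
static offset `o`, or to `3^r` for a dynamic index with variable prime `r`. -/
def varUsageExp (p : ℕ) (w : ℕ ⊕ ℕ) : ℕ :=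
  match w with
  | Sum.inl o => p ^ 2 ^ (o + 1)
  | Sum.inr r => p ^ 3 ^ r

lemma prime_pow_eq_prime_pow {p q a b : ℕ} (hp : p.Prime) (hq : q.Prime)
    (ha : 0 < a) (hb : 0 < b) (h : p ^ a = q ^ b) : p = q := by
  have : p ∣ q ^ b := h ▸ dvd_pow_self p ha.ne'
  exact ((Nat.prime_dvd_prime_iff_eq hp hq).mp (hp.dvd_of_dvd_pow this))

theorem varUsageExp_injective (p p' : ℕ) (hp : p.Prime) (hp' : p'.Prime)
    (w w' : ℕ ⊕ ℕ)
    (hw : ∀ r, w = Sum.inr r → r.Prime) (hw' : ∀ r, w' = Sum.inr r → r.Prime)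
    (h : varUsageExp p w = varUsageExp p' w') :
    p = p' ∧ w = w' := by
  have hexp : ∀ (x : ℕ ⊕ ℕ), 0 < (match x with
    | Sum.inl o => 2 ^ (o + 1) | Sum.inr r => 3 ^ r) := by
    rintro (o | r) <;> positivity
  cases w with
  | inl o =>
    cases w' with
    | inl o' =>
      have hpp : p = p' :=
        prime_pow_eq_prime_pow hp hp' (by positivity) (by positivity) h
      subst hpp
      have he : 2 ^ (o + 1) = 2 ^ (o' + 1) :=
        Nat.pow_right_injective hp.two_le h
      have : o + 1 = o' + 1 := Nat.pow_right_injective (le_refl 2) he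
      exact ⟨rfl, by simp [Nat.succ_injective this]⟩
    | inr r =>
      have hpp : p = p' :=
        prime_pow_eq_prime_pow hp hp' (by positivity) (by positivity) h
      subst hpp
      have he : 2 ^ (o + 1) = 3 ^ r :=
        Nat.pow_right_injective hp.two_le h
      exfalso
      have h2 : 2 ∣ 3 ^ r := he ▸ dvd_pow_self 2 (Nat.succ_ne_zero o)
      have := Nat.Prime.dvd_of_dvd_pow Nat.prime_two h2
      omega
  | inr r =>
    cases w' with
    | inl o' =>
      have hpp : p = p' :=
        prime_pow_eq_prime_pow hp hp' (by positivity) (by positivity) h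
      subst hpp
      have he : 3 ^ r = 2 ^ (o' + 1) :=
        Nat.pow_right_injective hp.two_le h
      exfalso
      have h2 : 2 ∣ 3 ^ r := he.symm ▸ dvd_pow_self 2 (Nat.succ_ne_zero o')
      have := Nat.Prime.dvd_of_dvd_pow Nat.prime_two h2
      omega
    | inr r' =>
      have hpp : p = p' :=
        prime_pow_eq_prime_pow hp hp' (by positivity) (by positivity) h
      subst hpp
      have he : 3 ^ r = 3 ^ r' := Nat.pow_right_injective hp.two_le h
      have : r = r' := Nat.pow_right_injective (by norm_num) he
      exact ⟨rfl, by simp [this]⟩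
end

section
/- Define the tower function T on nonempty finite lists over the set {2, 3, 5, 7} by T([a]) = a and T(a :: l) = a^(T(l)) for a nonempty tail l. Then T is injective: two nonempty lists over {2, 3, 5, 7} with the same tower value are equal. -/
/-- The right-nested exponential tower of a list: `T [a] = a`,
`T (a :: l) = a ^ T l` for nonempty `l`. -/
def tower : List ℕ → ℕ
  | [] => 1
  | [a] => a
  | a :: b :: l => a ^ tower (b :: l)

lemma mem_prime {x : ℕ} (hx : x ∈ ({2, 3, 5, 7} : Set ℕ)) : x.Prime := by
  rcases hx with h | h | h | h <;> subst h <;> norm_num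

lemma two_le_tower : ∀ l : List ℕ, l ≠ [] →
    (∀ x ∈ l, x ∈ ({2, 3, 5, 7} : Set ℕ)) → 2 ≤ tower l
  | [], h, _ => absurd rfl h
  | [a], _, hm => by
    have := (mem_prime (hm a (by simp))).two_le
    simpa [tower] using this
  | a :: b :: l, _, hm => by
    have ha : 2 ≤ a := (mem_prime (hm a (by simp))).two_le
    have ht : 2 ≤ tower (b :: l) :=
      two_le_tower (b :: l) (by simp) (fun x hx => hm x (by simp [hx]))
    calc 2 ≤ a := ha
      _ ≤ a ^ tower (b :: l) := Nat.le_self_pow (by omega) a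
      _ = tower (a :: b :: l) := by simp [tower]

lemma tower_inj_aux : ∀ l l' : List ℕ, l ≠ [] → l' ≠ [] →
    (∀ x ∈ l, x ∈ ({2, 3, 5, 7} : Set ℕ)) →
    (∀ x ∈ l', x ∈ ({2, 3, 5, 7} : Set ℕ)) →
    tower l = tower l' → l = l'
  | [], _, hl, _, _, _, _ => absurd rfl hl
  | _ :: _, [], _, hl', _, _, _ => absurd rfl hl'
  | [a], [b], _, _, _, _, h => by
    simp [tower] at h; simp [h]
  | [a], b :: c :: l', _, _, hm, hm', h => by
    exfalso
    have pa : a.Prime := mem_prime (hm a (by simp))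
    have ht : 2 ≤ tower (c :: l') :=
      two_le_tower (c :: l') (by simp) (fun x hx => hm' x (by simp [hx]))
    have h' : b ^ tower (c :: l') = a := by simpa [tower] using h.symm
    have := (Nat.Prime.pow_eq_iff pa).mp h'
    omega
  | a :: c :: l, [b], _, _, hm, hm', h => by
    exfalso
    have pb : b.Prime := mem_prime (hm' b (by simp))
    have ht : 2 ≤ tower (c :: l) :=
      two_le_tower (c :: l) (by simp) (fun x hx => hm x (by simp [hx]))
    have h' : a ^ tower (c :: l) = b := by simpa [tower] using h
    have := (Nat.Prime.pow_eq_iff pb).mp h'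
    omega
  | a :: c :: l, b :: d :: l', _, _, hm, hm', h => by
    have pa : a.Prime := mem_prime (hm a (by simp))
    have pb : b.Prime := mem_prime (hm' b (by simp))
    have hs : 2 ≤ tower (c :: l) :=
      two_le_tower (c :: l) (by simp) (fun x hx => hm x (by simp [hx]))
    have h' : a ^ tower (c :: l) = b ^ tower (d :: l') := by simpa [tower] using h
    have hdvd : a ∣ b ^ tower (d :: l') := h' ▸ dvd_pow_self a (by omega)
    have hab : a = b :=
      (Nat.prime_dvd_prime_iff_eq pa pb).mp (pa.dvd_of_dvd_pow hdvd)
    subst hab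
    have hexp : tower (c :: l) = tower (d :: l') :=
      Nat.pow_right_injective pa.two_le h'
    have htail : c :: l = d :: l' :=
      tower_inj_aux (c :: l) (d :: l') (by simp) (by simp)
        (fun x hx => hm x (by simp [hx])) (fun x hx => hm' x (by simp [hx])) hexp
    rw [htail]

theorem tower_injective (l l' : List ℕ) (hl : l ≠ []) (hl' : l' ≠ [])
    (hmem : ∀ x ∈ l, x ∈ ({2, 3, 5, 7} : Set ℕ))
    (hmem' : ∀ x ∈ l', x ∈ ({2, 3, 5, 7} : Set ℕ))
    (h : tower l = tower l') : l = l' :=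
  tower_inj_aux l l' hl hl' hmem hmem' h
end

section
/- Let U and B be arbitrary types of unary and binary operator labels, and let Expr be the inductive type of expression trees with constructors leaf : ℕ → Expr, un : U → Expr → Expr, and bin : B → Expr → Expr → Expr, with symbol type S = ℕ ⊕ U ⊕ B and postorder serialization post : Expr → List S defined by post(leaf n) = [inl n], post(un u t) = post(t) ++ [symbol of u], and post(bin b t₁ t₂) = post(t₁) ++ post(t₂) ++ [symbol of b]. Let enc : S → ℕ be an injective function with all values positive, and let p_i denote the (i+1)-st prime. Define the certificate Cert(t) = ∏_{i<n} p_i^{enc(s_i)}, where [s_0, …, s_{n-1}] = post(t). Then Cert is injective: two expression trees with the same certificate are equal. -/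
/-- Expression trees with natural-number leaves, unary operators drawn from `U`,
and binary operators drawn from `B`. -/
inductive Expr (U B : Type) where
  | leaf : ℕ → Expr U B
  | un : U → Expr U B → Expr U B
  | bin : B → Expr U B → Expr U B → Expr U B

/-- Postorder serialization of an expression tree into symbols `ℕ ⊕ U ⊕ B`. -/
def post {U B : Type} : Expr U B → List (ℕ ⊕ U ⊕ B)
  | .leaf n => [Sum.inl n]
  | .un u t => post t ++ [Sum.inr (Sum.inl u)]
  | .bin b t₁ t₂ => post t₁ ++ post t₂ ++ [Sum.inr (Sum.inr b)]

/-- The positional prime-power encoding of a list `[s₀, …, s_{n-1}]`: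
`∏_{i<n} pᵢ^{enc sᵢ}`, where `pᵢ` is the (i+1)-st prime (`p₀ = 2`, `p₁ = 3`, …). -/
noncomputable def posCode {S : Type} (enc : S → ℕ) (l : List S) : ℕ :=
  (l.zipIdx.map (fun p => (Nat.nth Nat.Prime p.2) ^ enc p.1)).prod

/-- The Gödel-style certificate of an expression tree: the positional prime-power
encoding of its postorder symbol list. -/
noncomputable def Cert {U B : Type} (enc : (ℕ ⊕ U ⊕ B) → ℕ) (t : Expr U B) : ℕ :=
  posCode enc (post t)

/-! Distinct positions carry distinct primes, so the exponent of the `j`-th prime in the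
certificate is `enc` of the `j`-th postfix symbol, or `0` past the end; positivity and
injectivity of `enc` therefore recover the postfix list. Postfix notation is unambiguous:
the usual stack machine, run over `post t`, pushes exactly `t`, so `post` has a left inverse. -/

section PositionalCode

variable {S : Type}

lemma factorization_prod_zipIdx_nth_prime (e : S → ℕ) (l : List S) (k i : ℕ) :
    ((l.zipIdx k).map fun p => Nat.nth Nat.Prime p.2 ^ e p.1).prod.factorization
        (Nat.nth Nat.Prime i) = if k ≤ i then (l[i - k]?.map e).getD 0 else 0 := by
  induction l generalizing k with
  | nil => simp
  | cons s l ih =>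
    have hp : (Nat.nth Nat.Prime k).Prime := Nat.prime_nth_prime k
    have hrest : ((l.zipIdx (k + 1)).map fun p => Nat.nth Nat.Prime p.2 ^ e p.1).prod ≠ 0 := by
      simp [List.prod_eq_zero_iff, (Nat.prime_nth_prime _).ne_zero]
    rw [List.zipIdx_cons, List.map_cons, List.prod_cons,
      Nat.factorization_mul (pow_ne_zero _ hp.ne_zero) hrest, hp.factorization_pow,
      Finsupp.add_apply, ih, Finsupp.single_apply]
    simp only [(Nat.nth_injective Nat.infinite_setOfPred_prime).eq_iff]
    rcases lt_trichotomy i k with hik | rfl | hki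
    · simp [hik.ne', hik.not_ge, (hik.trans k.lt_succ_self).not_ge]
    · simp
    · obtain ⟨j, rfl⟩ := Nat.exists_eq_add_of_lt hki
      simp [hki.ne, hki.le, show k + 1 ≤ k + j + 1 by omega, show k + j + 1 - k = j + 1 by omega,
        show k + j + 1 - (k + 1) = j by omega]

lemma posCode_factorization_nth_prime (e : S → ℕ) (l : List S) (j : ℕ) :
    (posCode e l).factorization (Nat.nth Nat.Prime j) = (l[j]?.map e).getD 0 := by
  simpa [posCode] using factorization_prod_zipIdx_nth_prime e l 0 j

lemma Option.getD_map_injective {e : S → ℕ} (he : Function.Injective e) (hpos : ∀ s, 0 < e s) :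
    Function.Injective fun o : Option S => (o.map e).getD 0 := by
  rintro (_ | a) (_ | b) h <;> simp only [Option.map_none, Option.map_some, Option.getD_none,
    Option.getD_some] at h
  · rfl
  · exact absurd h.symm (hpos b).ne'
  · exact absurd h (hpos a).ne'
  · rw [he h]

theorem posCode_injective {e : S → ℕ} (he : Function.Injective e) (hpos : ∀ s, 0 < e s) :
    Function.Injective (posCode e) := fun l₁ l₂ h =>
  List.ext_getElem? fun j => Option.getD_map_injective he hpos <| by
    simp only [← posCode_factorization_nth_prime, h]

end PositionalCode

section Postfix

variable {U B : Type}

def postfixStep : List (Expr U B) → ℕ ⊕ U ⊕ B → List (Expr U B)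
  | st, .inl n => .leaf n :: st
  | t :: st, .inr (.inl u) => .un u t :: st
  | t₂ :: t₁ :: st, .inr (.inr b) => .bin b t₁ t₂ :: st
  | st, _ => st

lemma foldl_postfixStep_post (t : Expr U B) (st : List (Expr U B)) :
    (post t).foldl postfixStep st = t :: st := by
  induction t generalizing st with
  | leaf n => rfl
  | un u t ih => simp [post, ih, postfixStep]
  | bin b t₁ t₂ ih₁ ih₂ => simp [post, ih₁, ih₂, postfixStep]

theorem post_injective : Function.Injective (post (U := U) (B := B)) := fun t₁ t₂ h => by
  simpa [foldl_postfixStep_post] using congrArg (List.foldl postfixStep []) h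

end Postfix

theorem Cert_injective {U B : Type} (enc : (ℕ ⊕ U ⊕ B) → ℕ)
    (henc : Function.Injective enc) (hpos : ∀ s, 0 < enc s)
    (t₁ t₂ : Expr U B) (h : Cert enc t₁ = Cert enc t₂) : t₁ = t₂ :=
  post_injective (posCode_injective (e := enc) henc hpos h)
end
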